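/- arXiv:1604.06753 — 6 statements merged into one kernel-verified Lean document; each statement's English description precedes it below -/
import Mathlib

section
/- Let f be a polynomial of degree mn over F_q with n-Horner form components f_0,...,f_{m-1}, f_m, and let H_m(n,f) be the m×m matrix over F_q[X] with diagonal entries X^n (except the (m,m)-entry), entries −1 on the subdiagonal, last column (f_0, f_1, ..., f_{m-2}, f_{m-1} + f_m X^n)^T, and zeros elsewhere. Then det(H_m(n,f)) = f(X). -/
/-!
Expanding along the last row, the determinant `D(v)` of an `(m+1) × (m+1)` matrix with `t` on
the diagonal, `-1` on the subdiagonal and last column `v` satisfies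
`D(v) = D(v₀, …, v_{m-1}) + v_m t^m`, hence `D(v) = ∑ vᵢ tⁱ`. For the Horner matrix `t = X^n`
and the `vᵢ` are the blocks of `n` consecutive coefficients of `f`, so this sum just regroups
the coefficients of `f`.
-/

open Polynomial Matrix

/-- The n-Horner matrix `H_m(n,f)` of a polynomial `f` of degree `m*n`:
diagonal entries `X^n` (except the bottom-right one), `-1` on the subdiagonal,
last column the n-Horner components `(f_0, ..., f_{m-2}, f_{m-1} + f_m X^n)ᵀ`
where `f_i = ∑_{k<n} a_{i n + k} X^k` and `f_m = a_{mn}`. -/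
noncomputable def hornerMatrix (K : Type*) [Field K] (m n : ℕ) (f : Polynomial K) :
    Matrix (Fin m) (Fin m) (Polynomial K) :=
  Matrix.of fun i j =>
    if (j : ℕ) = m - 1 then
      (if (i : ℕ) = m - 1 then
        (∑ k ∈ Finset.range n, Polynomial.C (f.coeff ((m - 1) * n + k)) * X ^ k)
          + Polynomial.C (f.coeff (m * n)) * X ^ n
       else ∑ k ∈ Finset.range n, Polynomial.C (f.coeff ((i : ℕ) * n + k)) * X ^ k)
    else if i = j then X ^ n
    else if (i : ℕ) = (j : ℕ) + 1 then -1 else 0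

open Finset

namespace Matrix

variable {R : Type*} [CommRing R]

def lastColumnBidiagonal {m : ℕ} (t : R) (v : Fin (m + 1) → R) :
    Matrix (Fin (m + 1)) (Fin (m + 1)) R :=
  of fun i j => if j = Fin.last m then v i else if i = j then t
    else if (i : ℕ) = j + 1 then -1 else 0

theorem det_lastColumnBidiagonal_succ {m : ℕ} (t : R) (v : Fin (m + 2) → R) :
    (lastColumnBidiagonal t v).det =
      (lastColumnBidiagonal t (v ∘ Fin.castSucc)).det + v (Fin.last _) * t ^ (m + 1) := by
  have htriangular : ((lastColumnBidiagonal t v).submatrix Fin.castSucc Fin.castSucc).det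
      = t ^ (m + 1) := by
    rw [det_of_isLowerTriangular]
    · simp [lastColumnBidiagonal]
    · intro i j hij
      have : (i : ℕ) < j := hij
      have := j.isLt
      simp only [lastColumnBidiagonal, submatrix_apply, of_apply, Fin.ext_iff, Fin.val_castSucc,
        Fin.val_last]
      split_ifs <;> first | rfl | omega
  have hminor : (lastColumnBidiagonal t v).submatrix Fin.castSucc
      (Fin.succAbove (Fin.last m).castSucc) = lastColumnBidiagonal t (v ∘ Fin.castSucc) := by
    ext i j
    rcases Fin.eq_castSucc_or_eq_last j with ⟨j, rfl⟩ | rfl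
    · simp only [lastColumnBidiagonal, submatrix_apply, of_apply, Function.comp_apply,
        Fin.succAbove_of_castSucc_lt _ _ (Fin.castSucc_lt_last j), Fin.castSucc_succAbove_castSucc,
        Fin.ext_iff, Fin.val_castSucc, Fin.val_last]
      have := j.isLt
      split_ifs <;> first | rfl | omega
    · simp [lastColumnBidiagonal]
  rw [det_succ_row _ (Fin.last _), Fin.sum_univ_castSucc, Fin.sum_univ_castSucc]
  have hzero (j : Fin m) : lastColumnBidiagonal t v (Fin.last _) j.castSucc.castSucc = 0 := by
    have := j.isLt
    simp only [lastColumnBidiagonal, of_apply, Fin.ext_iff, Fin.val_castSucc, Fin.val_last]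
    split_ifs <;> first | rfl | omega
  have hsub : lastColumnBidiagonal t v (Fin.last _) (Fin.last m).castSucc = -1 := by
    simp [lastColumnBidiagonal, Fin.ext_iff]
  simp only [hzero, hsub, Fin.succAbove_last, hminor, htriangular, Fin.val_last, Fin.val_castSucc,
    mul_zero, zero_mul, sum_const_zero, zero_add]
  have hlast : lastColumnBidiagonal t v (Fin.last _) (Fin.last _) = v (Fin.last _) := by
    simp [lastColumnBidiagonal]
  have hsign : (-1 : R) ^ (m + 1 + m) * -1 = 1 := by
    rw [← pow_succ, show m + 1 + m + 1 = 2 * (m + 1) by ring, pow_mul, neg_one_sq, one_pow]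
  rw [hlast, hsign, ← two_mul, pow_mul, neg_one_sq, one_pow, one_mul, one_mul]

theorem det_lastColumnBidiagonal {m : ℕ} (t : R) (v : Fin (m + 1) → R) :
    (lastColumnBidiagonal t v).det = ∑ i, v i * t ^ (i : ℕ) := by
  induction m with
  | zero => simp [lastColumnBidiagonal]
  | succ m ih =>
    rw [det_lastColumnBidiagonal_succ, ih, Fin.sum_univ_castSucc (fun i => v i * t ^ (i : ℕ))]
    simp only [Function.comp_apply, Fin.val_castSucc, Fin.val_last]

end Matrix

namespace Polynomial

variable {R : Type*} [CommRing R]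

noncomputable def hornerBlock (f : R[X]) (n i : ℕ) : R[X] :=
  ∑ k ∈ range n, C (f.coeff (i * n + k)) * X ^ k

theorem sum_hornerBlock_mul_pow (f : R[X]) (m n : ℕ) :
    ∑ i ∈ range m, hornerBlock f n i * (X ^ n) ^ i =
      ∑ j ∈ range (m * n), C (f.coeff j) * X ^ j := by
  induction m with
  | zero => simp
  | succ m ih =>
    rw [sum_range_succ, ih, Nat.succ_mul, sum_range_add, hornerBlock, sum_mul]
    congr 1
    refine sum_congr rfl fun k _ => ?_
    rw [mul_assoc, ← pow_mul, ← pow_add, add_comm k, mul_comm n]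

theorem eq_sum_hornerBlock_mul_pow {f : R[X]} {m n : ℕ} (hf : f.natDegree ≤ m * n) :
    f = ∑ i ∈ range m, hornerBlock f n i * (X ^ n) ^ i + C (f.coeff (m * n)) * X ^ (m * n) := by
  rw [sum_hornerBlock_mul_pow, ← sum_range_succ]
  exact as_sum_range_C_mul_X_pow' f (Nat.lt_succ_of_le hf)

end Polynomial

theorem hornerMatrix_eq_lastColumnBidiagonal {K : Type*} [Field K] (m n : ℕ) (f : K[X]) :
    hornerMatrix K (m + 1) n f = lastColumnBidiagonal (X ^ n) fun i =>
      hornerBlock f n i + if i = Fin.last m then C (f.coeff ((m + 1) * n)) * X ^ n else 0 := by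
  refine Matrix.ext fun i j => ?_
  rcases Fin.eq_castSucc_or_eq_last i with ⟨i, rfl⟩ | rfl
  · simp [hornerMatrix, lastColumnBidiagonal, hornerBlock, Fin.ext_iff, i.isLt.ne]
  · simp [hornerMatrix, lastColumnBidiagonal, hornerBlock, Fin.ext_iff]

theorem det_hornerMatrix_general {K : Type*} [Field K] (m n : ℕ) (hm : 0 < m)
    (f : Polynomial K) (hdeg : f.natDegree = m * n) :
    (hornerMatrix K m n f).det = f := by
  obtain ⟨m, rfl⟩ : ∃ k, m = k + 1 := ⟨m - 1, by omega⟩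
  rw [hornerMatrix_eq_lastColumnBidiagonal, det_lastColumnBidiagonal, Fin.sum_univ_castSucc]
  simp only [Fin.castSucc_ne_last, Fin.val_castSucc, Fin.val_last, if_true, if_false, add_zero]
  rw [Fin.sum_univ_eq_sum_range (fun i => hornerBlock f n i * (X ^ n) ^ i)]
  conv_rhs => rw [eq_sum_hornerBlock_mul_pow hdeg.le, sum_range_succ]
  ring

theorem det_hornerMatrix {K : Type*} [Field K] (m n : ℕ) (hm : 0 < m) (hn : 0 < n)
    (f : Polynomial K) (hdeg : f.natDegree = m * n) :
    (hornerMatrix K m n f).det = f :=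
  det_hornerMatrix_general m n hm f hdeg
end

section
/- For a monic polynomial f of degree mn over F_q, let C_0,...,C_{n-1} be the coefficient matrices of the n-Horner matrix, i.e., H_m(n,f) = I_m X^n + C_{n-1}X^{n-1} + ⋯ + C_0, and let T̃ be the corresponding (m,n)-block companion matrix. Then the characteristic polynomial of T̃ equals f(X). -/
open Polynomial Matrix

/-- The (m,n)-block companion matrix with identity blocks on the block subdiagonal
and last block column `(C 0, ..., C (n-1))ᵀ`. -/
def blockCompanion {K : Type*} [Field K] (m n : ℕ)
    (C : Fin n → Matrix (Fin m) (Fin m) K) :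
    Matrix (Fin n × Fin m) (Fin n × Fin m) K :=
  Matrix.of fun p q =>
    if (q.1 : ℕ) = n - 1 then C p.1 p.2 q.2
    else if (p.1 : ℕ) = (q.1 : ℕ) + 1 ∧ p.2 = q.2 then (1 : K) else 0


/-!
`T̃` is the matrix of multiplication by `x = X mod f` on `K[X]/(f)` in the basis `x ^ (i + n j)`
(`i < n` the block, `j < m` the position inside it). The identity blocks send `x ^ (i + n j)` to
`x ^ (i + 1 + n j)`, and the last block column sends `x ^ (n - 1 + n j)` to `x ^ (n (j + 1))`:
for `j < m - 1` this is the `-1` below the diagonal of `H_m(n, f)`, for `j = m - 1` it is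
`f(x) = 0`. So the characteristic polynomial of `T̃` is the minimal polynomial of `x`, i.e. `f`.
-/

namespace Algebra

variable {R S ι : Type*} [CommRing R] [Ring S] [Algebra R S] [Fintype ι] [DecidableEq ι]

theorem eq_leftMulMatrix_of_sum_smul (b : Module.Basis ι R S) (x : S) (M : Matrix ι ι R)
    (hM : ∀ j, ∑ i, M i j • b i = x * b j) : M = leftMulMatrix b x := by
  ext i j
  rw [leftMulMatrix_eq_repr_mul, ← hM j, b.repr_sum_self]

theorem charpoly_leftMulMatrix_gen (pb : PowerBasis R S) (b : Module.Basis ι R S) :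
    (leftMulMatrix b pb.gen).charpoly = minpoly R pb.gen := by
  have := Module.Free.of_basis b
  have := Module.Finite.of_basis b
  rw [leftMulMatrix_apply, LinearMap.charpoly_toMatrix, ← LinearMap.charpoly_toMatrix _ pb.basis,
    ← leftMulMatrix_apply, charpoly_leftMulMatrix]

end Algebra

theorem sum_fin_prod_fin_eq_sum_range {M : Type*} [AddCommMonoid M] (m n : ℕ) (g : ℕ → M) :
    ∑ p : Fin n × Fin m, g (p.1 + n * p.2) = ∑ i ∈ Finset.range (m * n), g i := by
  rw [← Fin.sum_univ_eq_sum_range, ← ((Equiv.prodComm _ _).trans finProdFinEquiv).sum_comp]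
  rfl

namespace PowerBasis

variable {R S : Type*} [CommRing R] [Ring S] [Algebra R S] {m n : ℕ}

noncomputable def blockBasis (pb : PowerBasis R S) (h : pb.dim = m * n) :
    Module.Basis (Fin n × Fin m) R S :=
  pb.basis.reindex ((finCongr h).trans (finProdFinEquiv.symm.trans (Equiv.prodComm _ _)))

@[simp]
theorem blockBasis_apply (pb : PowerBasis R S) (h : pb.dim = m * n) (q : Fin n × Fin m) :
    pb.blockBasis h q = pb.gen ^ ((q.1 : ℕ) + n * q.2) := by
  simp [blockBasis]

end PowerBasis

noncomputable def hornerCoeff (K : Type*) [Field K] (m n : ℕ) (f : K[X]) (k : Fin n) :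
    Matrix (Fin m) (Fin m) K :=
  Matrix.of fun a b => -((hornerMatrix K m n f a b).coeff k)

section Horner

variable {K : Type*} [Field K] {m n : ℕ} {f : K[X]}

theorem hornerCoeff_apply_of_last (k : Fin n) (a : Fin m) {b : Fin m} (hb : (b : ℕ) = m - 1) :
    hornerCoeff K m n f k a b = -f.coeff (a * n + k) := by
  by_cases ha : (a : ℕ) = m - 1
  · simp [hornerCoeff, hornerMatrix, hb, ha, coeff_X_pow, k.isLt.ne]
  · simp [hornerCoeff, hornerMatrix, hb, ha]

theorem hornerCoeff_apply_of_ne_last (k : Fin n) (a : Fin m) {b : Fin m}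
    (hb : (b : ℕ) ≠ m - 1) :
    hornerCoeff K m n f k a b = if (a : ℕ) = b + 1 ∧ (k : ℕ) = 0 then 1 else 0 := by
  simp only [hornerCoeff, hornerMatrix, of_apply, if_neg hb]
  split_ifs <;> simp_all [coeff_X_pow, coeff_one, k.isLt.ne, Fin.ext_iff]

end Horner

section BlockCompanion

variable {K V : Type*} [Field K] [AddCommMonoid V] [Module K V] {m n : ℕ}
  (C : Fin n → Matrix (Fin m) (Fin m) K) (v : Fin n × Fin m → V)

theorem sum_blockCompanion_smul_of_last {i : Fin n} (hi : (i : ℕ) = n - 1) (j : Fin m) :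
    ∑ p, blockCompanion m n C p (i, j) • v p = ∑ p, C p.1 p.2 j • v p := by
  simp [blockCompanion, hi]

theorem sum_blockCompanion_smul_of_lt {i : Fin n} (hi : (i : ℕ) + 1 < n) (j : Fin m) :
    ∑ p, blockCompanion m n C p (i, j) • v p = v (⟨i + 1, hi⟩, j) := by
  have hi' : (i : ℕ) ≠ n - 1 := by omega
  rw [Finset.sum_eq_single (⟨i + 1, hi⟩, j)]
  · simp [blockCompanion, hi']
  · rintro p - hp
    rw [blockCompanion, of_apply, if_neg hi', if_neg, zero_smul]
    rintro ⟨h1, h2⟩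
    exact hp (Prod.ext (Fin.ext h1) h2)
  · simp

end BlockCompanion

section HornerColumns

variable {K S : Type*} [Field K] [Ring S] [Algebra K S] {m n : ℕ} {f : K[X]}

theorem sum_hornerCoeff_smul_pow_of_ne_last (x : S) (hn : 0 < n) {j : Fin m}
    (hj : (j : ℕ) ≠ m - 1) :
    ∑ p : Fin n × Fin m, hornerCoeff K m n f p.1 p.2 j • x ^ ((p.1 : ℕ) + n * p.2) =
      x ^ (n * (j + 1)) := by
  rw [Finset.sum_eq_single (⟨0, hn⟩, ⟨j + 1, by omega⟩)]
  · simp [hornerCoeff_apply_of_ne_last _ _ hj]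
  · rintro p - hp
    rw [hornerCoeff_apply_of_ne_last _ _ hj, if_neg, zero_smul]
    contrapose! hp
    ext <;> simp [hp.1, hp.2]
  · simp

theorem sum_hornerCoeff_smul_pow_of_last (hf : f.Monic) (hdeg : f.natDegree = m * n) {x : S}
    (hx : aeval x f = 0) {j : Fin m} (hj : (j : ℕ) = m - 1) :
    ∑ p : Fin n × Fin m, hornerCoeff K m n f p.1 p.2 j • x ^ ((p.1 : ℕ) + n * p.2) =
      x ^ (m * n) := by
  have hroot : ∑ i ∈ Finset.range (m * n), f.coeff i • x ^ i + x ^ (m * n) = 0 := by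
    rwa [aeval_eq_sum_range, Finset.sum_range_succ, hf.coeff_natDegree, one_smul, hdeg] at hx
  simp_rw [hornerCoeff_apply_of_last _ _ hj, neg_smul, Finset.sum_neg_distrib]
  rw [neg_eq_iff_eq_neg, ← eq_neg_of_add_eq_zero_left hroot, ← sum_fin_prod_fin_eq_sum_range]
  simp_rw [Nat.mul_comm _ n, Nat.add_comm _ (n * _)]

theorem sum_blockCompanion_hornerCoeff_smul_pow (hf : f.Monic) (hdeg : f.natDegree = m * n)
    {x : S} (hx : aeval x f = 0) (q : Fin n × Fin m) :
    ∑ p, blockCompanion m n (hornerCoeff K m n f) p q • x ^ ((p.1 : ℕ) + n * p.2) =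
      x * x ^ ((q.1 : ℕ) + n * q.2) := by
  obtain ⟨i, j⟩ := q
  rw [← pow_succ']
  by_cases hi : (i : ℕ) = n - 1
  · have hexp : (i : ℕ) + n * j + 1 = n * (j + 1) := by
      rw [hi, mul_add, mul_one]; have := i.pos; omega
    rw [sum_blockCompanion_smul_of_last _ _ hi, hexp]
    by_cases hj : (j : ℕ) = m - 1
    · rw [sum_hornerCoeff_smul_pow_of_last hf hdeg hx hj, hj, Nat.sub_add_cancel j.pos,
        mul_comm]
    · exact sum_hornerCoeff_smul_pow_of_ne_last x i.pos hj
  · rw [sum_blockCompanion_smul_of_lt _ _ (by omega), add_right_comm]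

end HornerColumns

theorem charpoly_hornerBlockCompanion_general {K : Type*} [Field K]
    (m n : ℕ)
    (f : Polynomial K) (hmon : f.Monic) (hdeg : f.natDegree = m * n) :
    (blockCompanion m n (fun j : Fin n =>
        Matrix.of fun a b : Fin m => -(((hornerMatrix K m n f) a b).coeff (j : ℕ)))).charpoly
      = f := by
  set pb := AdjoinRoot.powerBasis hmon.ne_zero
  have hmin : minpoly K pb.gen = f := AdjoinRoot.minpoly_powerBasis_gen_of_monic hmon
  have hx : aeval pb.gen f = 0 := by
    rw [AdjoinRoot.powerBasis_gen, AdjoinRoot.aeval_eq, AdjoinRoot.mk_self]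
  have hdim : pb.dim = m * n := by rw [AdjoinRoot.powerBasis_dim, hdeg]
  have hT : blockCompanion m n (hornerCoeff K m n f) =
      Algebra.leftMulMatrix (pb.blockBasis hdim) pb.gen :=
    Algebra.eq_leftMulMatrix_of_sum_smul _ _ _ fun q => by
      simpa only [PowerBasis.blockBasis_apply] using
        sum_blockCompanion_hornerCoeff_smul_pow hmon hdeg hx q
  change (blockCompanion m n (hornerCoeff K m n f)).charpoly = f
  rw [hT, Algebra.charpoly_leftMulMatrix_gen, hmin]

theorem charpoly_hornerBlockCompanion {K : Type*} [Field K] [Fintype K]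
    (m n : ℕ) (hm : 0 < m) (hn : 0 < n)
    (f : Polynomial K) (hmon : f.Monic) (hdeg : f.natDegree = m * n) :
    (blockCompanion m n (fun j : Fin n =>
        Matrix.of fun a b : Fin m => -(((hornerMatrix K m n f) a b).coeff (j : ℕ)))).charpoly
      = f :=
  charpoly_hornerBlockCompanion_general m n f hmon hdeg
end

section
/- The characteristic map Ψ_P from the set of (m,n)-block companion matrices over F_q whose characteristic polynomial is primitive, to the set of primitive polynomials of degree mn over F_q, given by T ↦ det(XI_{mn} − T), is surjective. -/
open Polynomial Matrix

/-- A polynomial over a finite field is primitive if it is monic, irreducible, and the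
image of `X` in the quotient ring `K[X]/(f)` has multiplicative order `q^(deg f) - 1`,
i.e. its roots generate the multiplicative group of `F_{q^(deg f)}`. -/
def IsPrimitivePoly (K : Type*) [Field K] [Fintype K] (f : Polynomial K) : Prop :=
  f.Monic ∧ Irreducible f ∧
    orderOf (Ideal.Quotient.mk (Ideal.span {f}) (Polynomial.X : Polynomial K)) =
      Fintype.card K ^ f.natDegree - 1

/-!
Every monic `f` of degree `m * n` is the characteristic polynomial of a block companion
matrix. Enumerate `Fin n × Fin m` by `(i, a) ↦ i + n * a`: multiplication by `X` then moves
position `(i, a)` to `(i + 1, a)` while `i + 1 < n`, and position `(n - 1, a)` to `(0, a + 1)`, so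
the ordinary companion matrix of `f`, reindexed this way, is block companion. Its last block
column carries the coefficients of `f` and the wrap-around ones inside `C 0`. Reindexing does
not change the characteristic polynomial, and that of the companion matrix of `f` is `f`, since
it is the matrix of multiplication by the root in the power basis of `K[X] / (f)`.
-/

section Companion

variable {R : Type*} [Ring R]

def companion (f : R[X]) (d : ℕ) : Matrix (Fin d) (Fin d) R :=
  Matrix.of fun i j => if (j : ℕ) + 1 = d then -f.coeff i else if (i : ℕ) = j + 1 then 1 else 0

theorem companion_apply_of_val_add_one_eq_val (f : R[X]) {d : ℕ} {k k' : Fin d}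
    (h : (k : ℕ) + 1 = k') (l : Fin d) : companion f d l k = if l = k' then 1 else 0 := by
  simp only [companion, of_apply, h, k'.isLt.ne, if_false, Fin.ext_iff]

theorem companion_apply_of_val_add_one_eq (f : R[X]) {d : ℕ} {k : Fin d}
    (h : (k : ℕ) + 1 = d) (l : Fin d) : companion f d l k = -f.coeff l := by
  simp only [companion, of_apply, h, if_true]

def stridedIndexEquiv (m n : ℕ) : Fin n × Fin m ≃ Fin (m * n) :=
  (Equiv.prodComm _ _).trans finProdFinEquiv

@[simp]
theorem stridedIndexEquiv_apply_val {m n : ℕ} (p : Fin n × Fin m) :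
    (stridedIndexEquiv m n p : ℕ) = p.1 + n * p.2 :=
  rfl

def companionBlocks (m n : ℕ) (f : R[X]) : Fin n → Matrix (Fin m) (Fin m) R :=
  fun i => Matrix.of fun a b =>
    if (b : ℕ) = m - 1 then -f.coeff (i + n * a) else if (i : ℕ) = 0 ∧ (a : ℕ) = b + 1 then 1 else 0

end Companion

section Field

variable {K : Type*} [Field K]

theorem charpoly_companion {f : K[X]} (hf : f.Monic) {d : ℕ} (hd : f.natDegree = d) :
    (companion f d).charpoly = f := by
  subst hd
  let pb := AdjoinRoot.powerBasis hf.ne_zero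
  have hgen : minpoly K pb.gen = f := AdjoinRoot.minpoly_powerBasis_gen_of_monic hf
  have hmul : companion f f.natDegree = Algebra.leftMulMatrix pb.basis pb.gen := by
    rw [pb.leftMulMatrix, pb.minpolyGen_eq, hgen]
    rfl
  rw [hmul]
  exact (charpoly_leftMulMatrix pb).trans hgen

theorem blockCompanion_companionBlocks (m n : ℕ) (f : K[X]) :
    blockCompanion m n (companionBlocks m n f) =
      (companion f (m * n)).submatrix (stridedIndexEquiv m n) (stridedIndexEquiv m n) := by
  ext p ⟨⟨i, hi⟩, ⟨a, ha⟩⟩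
  simp only [blockCompanion, companionBlocks, submatrix_apply, of_apply]
  rcases (by omega : i + 1 < n ∨ i + 1 = n) with hi' | hi'
  · rw [companion_apply_of_val_add_one_eq_val f
        (k' := stridedIndexEquiv m n (⟨i + 1, hi'⟩, ⟨a, ha⟩))
        (by simp only [stridedIndexEquiv_apply_val]; ring),
      if_neg (by omega)]
    simp only [Equiv.apply_eq_iff_eq, Prod.ext_iff, Fin.ext_iff]
  · rw [if_pos (by omega)]
    rcases (by omega : a + 1 < m ∨ a + 1 = m) with ha' | ha'
    · rw [companion_apply_of_val_add_one_eq_val f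
          (k' := stridedIndexEquiv m n (⟨0, by omega⟩, ⟨a + 1, ha'⟩))
          (by simp only [stridedIndexEquiv_apply_val]; rw [← hi']; ring),
        if_neg (by omega)]
      simp only [Equiv.apply_eq_iff_eq, Prod.ext_iff, Fin.ext_iff]
    · rw [companion_apply_of_val_add_one_eq f
          (by simp only [stridedIndexEquiv_apply_val]; rw [← hi', ← ha']; ring),
        if_pos (by omega)]
      rfl

end Field

theorem charpoly_map_surjective_on_primitive_general {K : Type*} [Field K] [Fintype K]
    (m n : ℕ)
    (f : Polynomial K) (hf : IsPrimitivePoly K f) (hdeg : f.natDegree = m * n) :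
    ∃ C : Fin n → Matrix (Fin m) (Fin m) K,
      (blockCompanion m n C).charpoly = f := by
  refine ⟨companionBlocks m n f, ?_⟩
  have hreindex := charpoly_reindex (stridedIndexEquiv m n).symm (companion f (m * n))
  rwa [reindex_apply, Equiv.symm_symm, charpoly_companion hf.1 hdeg,
    ← blockCompanion_companionBlocks] at hreindex

theorem charpoly_map_surjective_on_primitive {K : Type*} [Field K] [Fintype K]
    (m n : ℕ) (hm : 0 < m) (hn : 0 < n)
    (f : Polynomial K) (hf : IsPrimitivePoly K f) (hdeg : f.natDegree = m * n) :
    ∃ C : Fin n → Matrix (Fin m) (Fin m) K,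
      (blockCompanion m n C).charpoly = f :=
  charpoly_map_surjective_on_primitive_general m n f hf hdeg
end

section
/- For every primitive polynomial f of degree mn over F_q, there exists a block companion matrix T̃ ∈ GL_{mn}(F_q) (of MRMM type) whose characteristic polynomial is f and whose multiplicative order in GL_{mn}(F_q) is q^{mn} − 1. -/
open Polynomial Matrix

/-!
Let `x` be the class of `X` in `L = K[X]/(f)`; primitivity says `x` generates `Lˣ`. Multiplication
by `x` on `L` has characteristic polynomial `f`, and since `L → End_K(L)` is an injective algebra
map its matrix in any basis has the same order `q^(mn) - 1` as `x`. In the power basis, number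
`x^(i + n j)` by the pair `(i, j)` (block `i`, position `j`): then `x · x^(i + n j) = x^((i+1) + n j)`
whenever `i < n - 1`, so the matrix has identity blocks on the block subdiagonal and zero blocks
elsewhere outside the last block column, i.e. it is a block companion matrix.
-/

namespace Algebra

variable {R S : Type*} [CommRing R] [Ring S] [Algebra R S]

theorem charpoly_leftMulMatrix_eq {ι κ : Type*} [Fintype ι] [DecidableEq ι] [Fintype κ]
    [DecidableEq κ] (b : Module.Basis ι R S) (c : Module.Basis κ R S) (x : S) :
    (leftMulMatrix b x).charpoly = (leftMulMatrix c x).charpoly := by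
  have := Module.Free.of_basis b
  have := Module.Finite.of_basis b
  simp only [leftMulMatrix_apply, LinearMap.charpoly_toMatrix]

theorem leftMulMatrix_apply_of_mul_basis_eq {ι : Type*} [Fintype ι] [DecidableEq ι]
    (b : Module.Basis ι R S) {x : S} {i j k : ι} (h : x * b j = b k) :
    leftMulMatrix b x i j = if k = i then 1 else 0 := by
  rw [leftMulMatrix_eq_repr_mul, h, Module.Basis.repr_self, Finsupp.single_apply]

theorem orderOf_leftMulMatrix {ι : Type*} [Fintype ι] [DecidableEq ι]
    (b : Module.Basis ι R S) (x : S) : orderOf (leftMulMatrix b x) = orderOf x :=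
  orderOf_injective (leftMulMatrix b : S →* Matrix ι ι R) (leftMulMatrix_injective b) x

end Algebra

theorem PowerBasis.gen_mul_basis_reindex {R S ι : Type*} [CommRing R] [Ring S] [Algebra R S]
    (pb : PowerBasis R S) (e : ι ≃ Fin pb.dim) {j k : ι} (h : (e k : ℕ) = e j + 1) :
    pb.gen * pb.basis.reindex e.symm j = pb.basis.reindex e.symm k := by
  simp only [Module.Basis.reindex_apply, Equiv.symm_symm, PowerBasis.coe_basis, h, pow_succ']

def blockIndex (m n : ℕ) : Fin n × Fin m ≃ Fin (m * n) :=
  (Equiv.prodComm _ _).trans finProdFinEquiv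

section BlockIndex

variable {m n : ℕ}

theorem blockIndex_val (p : Fin n × Fin m) : (blockIndex m n p : ℕ) = p.1 + n * p.2 := rfl

theorem blockIndex_succ {q : Fin n × Fin m} (hq : (q.1 : ℕ) + 1 < n) :
    (blockIndex m n (⟨q.1 + 1, hq⟩, q.2) : ℕ) = blockIndex m n q + 1 := by
  simp only [blockIndex_val]
  ring

theorem leftMulMatrix_gen_reindex_blockIndex_apply {R S : Type*} [CommRing R] [Ring S]
    [Algebra R S] (pb : PowerBasis R S) (h : m * n = pb.dim) (p q : Fin n × Fin m)
    (hq : (q.1 : ℕ) ≠ n - 1) :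
    Algebra.leftMulMatrix (pb.basis.reindex ((blockIndex m n).trans (finCongr h)).symm) pb.gen p q
      = if (p.1 : ℕ) = q.1 + 1 ∧ p.2 = q.2 then 1 else 0 := by
  have hq' : (q.1 : ℕ) + 1 < n := by omega
  rw [Algebra.leftMulMatrix_apply_of_mul_basis_eq _
    (pb.gen_mul_basis_reindex _ (k := (⟨q.1 + 1, hq'⟩, q.2)) (blockIndex_succ hq'))]
  simp only [Prod.ext_iff, Fin.ext_iff, eq_comm]

end BlockIndex

section LastBlockColumn

variable {K : Type*} [Field K] {m n : ℕ}

def lastBlockColumn (B : Matrix (Fin n × Fin m) (Fin n × Fin m) K) :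
    Fin n → Matrix (Fin m) (Fin m) K :=
  fun i => Matrix.of fun a b => B (i, a) (⟨n - 1, Nat.sub_lt i.pos one_pos⟩, b)

theorem blockCompanion_lastBlockColumn (B : Matrix (Fin n × Fin m) (Fin n × Fin m) K)
    (hB : ∀ p q : Fin n × Fin m, (q.1 : ℕ) ≠ n - 1 →
      B p q = if (p.1 : ℕ) = q.1 + 1 ∧ p.2 = q.2 then 1 else 0) :
    blockCompanion m n (lastBlockColumn B) = B := by
  ext p q
  by_cases hq : (q.1 : ℕ) = n - 1
  · have : q.1 = ⟨n - 1, by omega⟩ := Fin.ext hq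
    simp [blockCompanion, lastBlockColumn, hq, ← this]
  · simp [blockCompanion, hq, hB p q hq]

end LastBlockColumn

theorem exists_blockCompanion_of_primitive_general {K : Type*} [Field K] [Fintype K]
    (m n : ℕ)
    (f : Polynomial K) (hf : IsPrimitivePoly K f) (hdeg : f.natDegree = m * n) :
    ∃ C : Fin n → Matrix (Fin m) (Fin m) K,
      IsUnit (blockCompanion m n C) ∧
      (blockCompanion m n C).charpoly = f ∧
      orderOf (blockCompanion m n C) = Fintype.card K ^ (m * n) - 1 := by
  obtain ⟨hmonic, hirr, hord⟩ := hf
  have : Fact (Irreducible f) := ⟨hirr⟩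
  set pb := AdjoinRoot.powerBasis hmonic.ne_zero
  set B := Algebra.leftMulMatrix
    (pb.basis.reindex ((blockIndex m n).trans (finCongr hdeg.symm)).symm) pb.gen
  refine ⟨lastBlockColumn B, ?_⟩
  rw [blockCompanion_lastBlockColumn B (leftMulMatrix_gen_reindex_blockIndex_apply pb hdeg.symm)]
  have hordB : orderOf B = Fintype.card K ^ (m * n) - 1 := by
    rw [Algebra.orderOf_leftMulMatrix, ← hdeg]
    -- `pb.gen` is `AdjoinRoot.root f`, definitionally the class of `X` in `K[X] ⧸ (f)`
    exact hord
  have hpos : 0 < Fintype.card K ^ (m * n) - 1 :=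
    Nat.sub_pos_of_lt (Nat.one_lt_pow (hdeg ▸ hirr.natDegree_pos).ne' Fintype.one_lt_card)
  refine ⟨(orderOf_pos_iff.mp (hordB ▸ hpos)).isUnit, ?_, hordB⟩
  rw [Algebra.charpoly_leftMulMatrix_eq _ pb.basis, charpoly_leftMulMatrix,
    AdjoinRoot.minpoly_powerBasis_gen_of_monic hmonic]

theorem exists_blockCompanion_of_primitive {K : Type*} [Field K] [Fintype K]
    (m n : ℕ) (hm : 0 < m) (hn : 0 < n)
    (f : Polynomial K) (hf : IsPrimitivePoly K f) (hdeg : f.natDegree = m * n) :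
    ∃ C : Fin n → Matrix (Fin m) (Fin m) K,
      IsUnit (blockCompanion m n C) ∧
      (blockCompanion m n C).charpoly = f ∧
      orderOf (blockCompanion m n C) = Fintype.card K ^ (m * n) - 1 :=
  exists_blockCompanion_of_primitive_general m n f hf hdeg
end

section
/- Let T ∈ GL_{mn}(F_q) be a block companion matrix of MRMM type with C_0 invertible. Then the order of T in GL_{mn}(F_q) is q^{mn} − 1 if and only if the characteristic polynomial det(M(X)) of T is a primitive polynomial of degree mn over F_q, where M(X) = I_m X^n − C_{n-1}X^{n-1} − ⋯ − C_0. -/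
open Polynomial Matrix

/-!
Row operations over `K[X]` with the unitriangular matrix `(X ^ (l - j) • 1)_{j ≤ l}`, followed by
a cyclic shift of the block rows, turn `X • 1 - T` into a block upper triangular matrix with
diagonal blocks `-1, …, -1, M(X)`; hence `det M(X)` is the characteristic polynomial `f` of `T`.

Since `f(T) = 0`, evaluation at `T` factors through `β : K[X]/(f) → M_{mn}(K)`, sending the class
of `X` to `T`. If `f` is irreducible, `K[X]/(f)` is a field, `β` is injective, and `T` has the same
order as `X mod f`. Conversely, if `T` has order `q^{mn} - 1`, the powers of `X mod f` below that
order are distinct, nonzero and mapped to units; with `0` they exhaust the `q^{mn}` elements of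
`K[X]/(f)`, so `β` sends every nonzero element to a unit. Thus `K[X]/(f)` is a domain, i.e. `f` is
irreducible, and `β` is injective.
-/

section FiniteRing

variable {R S : Type*} [Ring R] [Finite R] [Ring S] [Nontrivial S] (β : R →+* S) {x : R}

theorem isUnit_map_of_orderOf_map_eq (hx : orderOf (β x) = Nat.card R - 1) {r : R}
    (hr : r ≠ 0) : IsUnit (β r) := by
  classical
  have := Fintype.ofFinite R
  have hpos : 0 < orderOf (β x) := by
    have : 1 < Fintype.card R := Fintype.one_lt_card_iff.2 ⟨r, 0, hr⟩
    rw [hx, Nat.card_eq_fintype_card]; omega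
  have hunit : ∀ i, IsUnit (β (x ^ i)) := fun i => by
    rw [map_pow]; exact ((orderOf_pos_iff.1 hpos).isUnit).pow i
  have hpowers : (Finset.range (orderOf (β x))).image (x ^ ·) = Finset.univ.erase 0 := by
    refine Finset.eq_of_subset_of_card_le (fun y hy => ?_) ?_
    · obtain ⟨i, -, rfl⟩ := Finset.mem_image.1 hy
      exact Finset.mem_erase.2 ⟨fun h => (hunit i).ne_zero (by rw [h, map_zero]), Finset.mem_univ _⟩
    · rw [Finset.card_image_of_injOn, Finset.card_range, Finset.card_erase_of_mem (Finset.mem_univ _),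
        Finset.card_univ, hx, Nat.card_eq_fintype_card]
      intro i hi j hj hij
      refine pow_injOn_Iio_orderOf (Finset.mem_range.1 hi) (Finset.mem_range.1 hj) ?_
      simpa only [map_pow] using congrArg β hij
  obtain ⟨i, -, rfl⟩ := Finset.mem_image.1 (hpowers ▸ Finset.mem_erase.2 ⟨hr, Finset.mem_univ r⟩)
  exact hunit i

theorem injective_of_orderOf_map_eq (hx : orderOf (β x) = Nat.card R - 1) :
    Function.Injective β :=
  (injective_iff_map_eq_zero β).2 fun r hr => by
    by_contra h
    exact not_isUnit_zero (hr ▸ isUnit_map_of_orderOf_map_eq β hx h)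

theorem isDomain_of_orderOf_map_eq (hx : orderOf (β x) = Nat.card R - 1) : IsDomain R :=
  have := β.domain_nontrivial
  have : NoZeroDivisors R := ⟨fun {a b} hab => by
    by_contra! h
    have := (isUnit_map_of_orderOf_map_eq β hx h.1).mul (isUnit_map_of_orderOf_map_eq β hx h.2)
    rw [← map_mul, hab, map_zero] at this
    exact not_isUnit_zero this⟩
  NoZeroDivisors.to_isDomain R

end FiniteRing

theorem AdjoinRoot.natCard_eq_pow_natDegree {K : Type*} [Field K] {f : K[X]} (hf : f.Monic) :
    Nat.card (AdjoinRoot f) = Nat.card K ^ f.natDegree := by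
  have := hf.finite_adjoinRoot
  rw [Module.natCard_eq_pow_finrank (K := K)]
  exact congrArg _ finrank_quotient_span_eq_natDegree

theorem AdjoinRoot.irreducible_of_isDomain {K : Type*} [Field K] {f : K[X]} (hf : f ≠ 0)
    [IsDomain (AdjoinRoot f)] : Irreducible f :=
  ((Ideal.span_singleton_prime hf).1 <|
    (Ideal.Quotient.isDomain_iff_prime _).1 ‹_›).irreducible

theorem orderOf_eq_card_pow_sub_one_iff {K A : Type*} [Field K] [Fintype K] [Ring A]
    [Algebra K A] [Nontrivial A] {f : K[X]} (hf : f.Monic) {x : A} (hx : aeval x f = 0) :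
    orderOf x = Fintype.card K ^ f.natDegree - 1 ↔
      Irreducible f ∧ orderOf (AdjoinRoot.root f) = Fintype.card K ^ f.natDegree - 1 := by
  have := hf.finite_adjoinRoot
  have : Finite (AdjoinRoot f) := Module.finite_of_finite K
  let β : AdjoinRoot f →+* A := Ideal.Quotient.lift _ (aeval x).toRingHom fun g hg => by
    obtain ⟨c, rfl⟩ := Ideal.mem_span_singleton'.1 hg
    simp [hx]
  have hβ : β (AdjoinRoot.root f) = x := aeval_X x
  have horder (hβi : Function.Injective β) : orderOf x = orderOf (AdjoinRoot.root f) :=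
    hβ ▸ orderOf_injective β.toMonoidHom hβi _
  have hcard : Nat.card (AdjoinRoot f) - 1 = Fintype.card K ^ f.natDegree - 1 := by
    rw [AdjoinRoot.natCard_eq_pow_natDegree hf, Nat.card_eq_fintype_card]
  constructor
  · intro h
    rw [← hcard, ← hβ] at h
    have := isDomain_of_orderOf_map_eq β h
    refine ⟨AdjoinRoot.irreducible_of_isDomain hf.ne_zero, ?_⟩
    rw [← horder (injective_of_orderOf_map_eq β h), ← hcard, ← hβ, h]
  · rintro ⟨hirr, h⟩
    have := Fact.mk hirr
    rw [horder β.injective, h]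

theorem Matrix.BlockTriangular.det_fst {ι κ R : Type*} [CommRing R] [Fintype ι] [LinearOrder ι]
    [Fintype κ] [DecidableEq κ] {M : Matrix (ι × κ) (ι × κ) R}
    (hM : M.BlockTriangular Prod.fst) :
    M.det = ∏ i, (Matrix.of fun a b => M (i, a) (i, b)).det := by
  rw [hM.det_fintype]
  refine Finset.prod_congr rfl fun i _ => ?_
  let e : {p : ι × κ // p.1 = i} ≃ κ :=
    { toFun := fun p => p.1.2
      invFun := fun a => ⟨(i, a), rfl⟩
      left_inv := fun ⟨⟨_, _⟩, h⟩ => by subst h; rfl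
      right_inv := fun _ => rfl }
  rw [← det_submatrix_equiv_self e]
  congr 1
  ext ⟨⟨i₁, a⟩, h₁⟩ ⟨⟨i₂, b⟩, h₂⟩
  dsimp only at h₁ h₂
  subst h₁ h₂
  rfl

section BlockCompanion

variable {K : Type*} [Field K] {m n : ℕ}

-- `hornerTail C 0` is the paper's `M(X)`, and `hornerTail C j = X * hornerTail C (j + 1) - C j`.
noncomputable def hornerTail (C : Fin n → Matrix (Fin m) (Fin m) K) (j : Fin n) :
    Matrix (Fin m) (Fin m) K[X] :=
  (X : K[X]) ^ (n - j : ℕ) • 1 - ∑ l with j ≤ l, (X : K[X]) ^ (l - j : ℕ) • (C l).map Polynomial.C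

variable (m n) in
noncomputable def hornerRows : Matrix (Fin n × Fin m) (Fin n × Fin m) K[X] :=
  Matrix.of fun p q => if p.1 ≤ q.1 ∧ p.2 = q.2 then X ^ ((q.1 : ℕ) - p.1) else 0

variable (m n) in
theorem det_hornerRows : (hornerRows m n : Matrix _ _ K[X]).det = 1 := by
  have hL : (hornerRows m n : Matrix _ _ K[X]).BlockTriangular Prod.fst := fun p q h => by
    simp [hornerRows, not_le_of_gt h]
  rw [hL.det_fst]
  refine Finset.prod_eq_one fun i _ => ?_
  simp only [hornerRows, of_apply, le_refl, true_and, tsub_self, pow_zero, ← one_apply]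
  exact det_one

theorem hornerRows_mul_apply (A : Matrix (Fin n × Fin m) (Fin n × Fin m) K[X]) (j : Fin n)
    (a : Fin m) (q : Fin n × Fin m) :
    (hornerRows m n (K := K) * A) (j, a) q =
      ∑ l with j ≤ l, X ^ ((l : ℕ) - j) * A (l, a) q := by
  simp only [mul_apply, Fintype.sum_prod_type, hornerRows, of_apply, ite_and, Finset.sum_filter]
  simp

noncomputable def hornerReduced (C : Fin n → Matrix (Fin m) (Fin m) K) :
    Matrix (Fin n × Fin m) (Fin n × Fin m) K[X] :=
  Matrix.of fun p q =>
    if (q.1 : ℕ) = n - 1 then hornerTail C p.1 p.2 q.2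
    else if (p.1 : ℕ) = (q.1 : ℕ) + 1 ∧ p.2 = q.2 then -1 else 0

theorem hornerRows_mul_charmatrix (C : Fin n → Matrix (Fin m) (Fin m) K) :
    hornerRows m n * charmatrix (blockCompanion m n C) = hornerReduced C := by
  ext ⟨j, a⟩ ⟨k, b⟩ : 1
  rw [hornerRows_mul_apply]
  simp only [charmatrix_apply, blockCompanion, hornerReduced, of_apply, diagonal_apply,
    Prod.mk.injEq, mul_sub, Finset.sum_sub_distrib, ite_and]
  by_cases hk : (k : ℕ) = n - 1
  · simp only [hk, if_true, hornerTail]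
    simp only [mul_ite, mul_zero, Finset.sum_ite_eq', Finset.mem_filter, Finset.mem_univ, true_and,
      X_pow_mul_C, Matrix.sub_apply, Matrix.smul_apply, one_apply, smul_eq_mul, mul_one,
      Matrix.sum_apply, map_apply, sub_left_inj]
    rw [if_pos (Fin.le_def.2 (by omega)), ← pow_succ, show (k : ℕ) - j + 1 = n - j by omega]
  · simp only [hk, if_false]
    have hsucc (l : Fin n) : (l : ℕ) = k + 1 ↔ l = ⟨k + 1, by omega⟩ := by
      rw [Fin.ext_iff]
    simp only [mul_ite, mul_zero, Finset.sum_ite_eq', Finset.mem_filter, Finset.mem_univ, true_and,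
      hsucc, apply_ite Polynomial.C, map_one, map_zero, mul_one]
    rw [← pow_succ]
    simp only [Fin.le_def, Fin.ext_iff]
    split_ifs <;> first | omega | rw [sub_self] | skip
    · rw [Nat.sub_add_comm (by omega), sub_self]
    · rw [show (k : ℕ) + 1 - j = 0 by omega, pow_zero, zero_sub]

theorem det_hornerReduced (C : Fin (n + 1) → Matrix (Fin m) (Fin m) K) :
    (hornerReduced C).det = (hornerTail C 0).det := by
  -- shifting the block rows cyclically up by one makes the matrix block upper triangular
  let τ : Equiv.Perm (Fin (n + 1) × Fin m) := Equiv.prodCongrLeft fun _ => finRotate (n + 1)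
  have hτ (i : Fin (n + 1)) (a : Fin m) : τ (i, a) = (finRotate (n + 1) i, a) := rfl
  have htri : ((hornerReduced C).submatrix τ id).BlockTriangular Prod.fst := by
    rintro ⟨i, a⟩ ⟨k, b⟩ hki
    have hki : (k : ℕ) < i := hki
    have hrot : (finRotate (n + 1) i : ℕ) ≠ k + 1 := by rw [coe_finRotate]; split_ifs <;> omega
    simp only [submatrix_apply, hτ, id, hornerReduced, of_apply]
    rw [if_neg (by omega), if_neg fun h => hrot h.1]
  have hblock (i : Fin (n + 1)) : (of fun a b => (hornerReduced C).submatrix τ id (i, a) (i, b))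
      = if i = Fin.last n then hornerTail C 0 else -1 := by
    ext a b : 1
    by_cases hi : i = Fin.last n
    · simp [hi, hτ, hornerReduced]
    · have hi' : (i : ℕ) ≠ n := fun h => hi (Fin.ext h)
      simp [hi, hi', hτ, hornerReduced, Fin.val_add_one, one_apply, neg_ite]
  have hsign : (Equiv.Perm.sign τ : K[X]) = ((-1) ^ n) ^ m := by
    simp [τ, Equiv.Perm.sign_prodCongrLeft, sign_finRotate]
  have h := det_permute τ (hornerReduced C)
  rw [htri.det_fst, Fin.prod_univ_castSucc] at h
  simp only [hblock, if_pos, Fin.castSucc_ne_last, if_false, det_neg, det_one, Fintype.card_fin,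
    mul_one, Finset.prod_const, Finset.card_univ, hsign, ← pow_mul, mul_comm m n] at h
  exact (mul_left_cancel₀ (by simp) h).symm

theorem charpoly_blockCompanion (C : Fin n → Matrix (Fin m) (Fin m) K) :
    (blockCompanion m n C).charpoly =
      ((X : K[X]) ^ n • (1 : Matrix (Fin m) (Fin m) K[X])
        - ∑ j : Fin n, (X : K[X]) ^ (j : ℕ) • (C j).map Polynomial.C).det := by
  cases n with
  | zero => simp [Matrix.charpoly]
  | succ n =>
    have h := congrArg det (hornerRows_mul_charmatrix C)
    rw [det_mul, det_hornerRows, one_mul, det_hornerReduced] at h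
    rw [Matrix.charpoly, h, hornerTail]
    simp

end BlockCompanion

theorem Matrix.orderOf_eq_iff_isPrimitivePoly_charpoly {K ι : Type*} [Field K] [Fintype K]
    [Fintype ι] [DecidableEq ι] [Nonempty ι] (M : Matrix ι ι K) :
    orderOf M = Fintype.card K ^ Fintype.card ι - 1 ↔ IsPrimitivePoly K M.charpoly := by
  rw [IsPrimitivePoly, ← M.charpoly_natDegree_eq_dim,
    orderOf_eq_card_pow_sub_one_iff M.charpoly_monic M.aeval_self_charpoly,
    and_iff_right M.charpoly_monic]
  rfl

theorem orderOf_blockCompanion_iff_primitive_general {K : Type*} [Field K] [Fintype K]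
    (m n : ℕ) (hm : 0 < m) (hn : 0 < n)
    (C : Fin n → Matrix (Fin m) (Fin m) K) :
    orderOf (blockCompanion m n C) = Fintype.card K ^ (m * n) - 1 ↔
      (IsPrimitivePoly K
          (Matrix.det ((Polynomial.X (R := K)) ^ n • (1 : Matrix (Fin m) (Fin m) (Polynomial K))
            - ∑ j : Fin n, (Polynomial.X (R := K)) ^ (j : ℕ) • (C j).map Polynomial.C)) ∧
        (Matrix.det ((Polynomial.X (R := K)) ^ n • (1 : Matrix (Fin m) (Fin m) (Polynomial K))
            - ∑ j : Fin n, (Polynomial.X (R := K)) ^ (j : ℕ) • (C j).map Polynomial.C)).natDegree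
          = m * n) := by
  have : Nonempty (Fin n × Fin m) := ⟨(⟨0, hn⟩, ⟨0, hm⟩)⟩
  have hcard : Fintype.card (Fin n × Fin m) = m * n := by simp [mul_comm]
  rw [← charpoly_blockCompanion, charpoly_natDegree_eq_dim, hcard, and_iff_left rfl, ← hcard,
    orderOf_eq_iff_isPrimitivePoly_charpoly]

theorem orderOf_blockCompanion_iff_primitive {K : Type*} [Field K] [Fintype K]
    (m n : ℕ) (hm : 0 < m) (hn : 0 < n)
    (C : Fin n → Matrix (Fin m) (Fin m) K)
    (hC0 : IsUnit (C ⟨0, hn⟩)) :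
    orderOf (blockCompanion m n C) = Fintype.card K ^ (m * n) - 1 ↔
      (IsPrimitivePoly K
          (Matrix.det ((Polynomial.X (R := K)) ^ n • (1 : Matrix (Fin m) (Fin m) (Polynomial K))
            - ∑ j : Fin n, (Polynomial.X (R := K)) ^ (j : ℕ) • (C j).map Polynomial.C)) ∧
        (Matrix.det ((Polynomial.X (R := K)) ^ n • (1 : Matrix (Fin m) (Fin m) (Polynomial K))
            - ∑ j : Fin n, (Polynomial.X (R := K)) ^ (j : ℕ) • (C j).map Polynomial.C)).natDegree
          = m * n) :=
  orderOf_blockCompanion_iff_primitive_general m n hm hn C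
end

section
/- If a multiple-recursive matrix method of order n over F_q^m is primitive, then for each coordinate j, the j-th coordinate sequence (s_i^{(j)}) over F_q has linear complexity exactly mn, i.e., its minimal polynomial over F_q has degree mn. -/
open Polynomial Matrix

/-!
On solutions of the recurrence, a linear state map `W` (`MatrixRecurrence.state`) into `K^{mn}`
satisfies `W (shift s) = T (W s)` for the block companion matrix `T`, and the last block of
`W s` is `s 0`. So `W` turns polynomials in the shift into polynomials in `T` and is injective on
solutions; by Cayley–Hamilton, `f = charpoly T` annihilates every solution, hence every
coordinate sequence.

As `f` is irreducible of degree `mn = dim K^{mn}`, every nonzero vector is cyclic for `T`. If a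
coordinate sequence of a nonzero solution `s` vanished, the corresponding coordinate of the last
block would vanish on the `T`-orbit of `W s`, hence everywhere. So each coordinate sequence is
nonzero, and every polynomial annihilating it is a multiple of the irreducible `f`.
-/

namespace Module.End

variable {K V : Type*} [Field K] [AddCommGroup V] [Module K V]

theorem natDegree_le_of_aeval_apply_eq_zero {φ : Module.End K V} {f p : K[X]} {v : V}
    (hf : Irreducible f) (hfv : aeval φ f v = 0) (hv : v ≠ 0) (hp : p ≠ 0)
    (hpv : aeval φ p v = 0) : f.natDegree ≤ p.natDegree := by
  refine natDegree_le_of_dvd ?_ hp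
  by_contra hndvd
  obtain ⟨a, b, hab⟩ := (hf.coprime_iff_not_dvd).2 hndvd
  apply hv
  calc v = aeval φ (a * f + b * p) v := by rw [hab, map_one, one_apply]
    _ = 0 := by simp [mul_apply, hfv, hpv]

theorem span_range_pow_apply_eq_top [FiniteDimensional K V] {φ : Module.End K V}
    (hφ : Irreducible φ.charpoly) {v : V} (hv : v ≠ 0) :
    Submodule.span K (Set.range fun k : ℕ => (φ ^ k) v) = ⊤ := by
  set N := φ.charpoly.natDegree
  let Φ : degreeLT K N →ₗ[K] V :=
    LinearMap.applyₗ v ∘ₗ (aeval φ).toLinearMap ∘ₗ (degreeLT K N).subtype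
  have hinj : Function.Injective Φ := by
    refine (injective_iff_map_eq_zero Φ).2 fun ⟨p, hp⟩ hΦ => ?_
    by_contra hne
    have hp0 : p ≠ 0 := fun h => hne (by simp [h])
    have hle := natDegree_le_of_aeval_apply_eq_zero hφ
      (by rw [LinearMap.aeval_self_charpoly]; rfl) hv hp0 hΦ
    rw [mem_degreeLT, ← natDegree_lt_iff_degree_lt hp0] at hp
    omega
  have hsurj : Function.Surjective Φ := by
    refine (LinearMap.injective_iff_surjective_of_finrank_eq_finrank ?_).1 hinj
    rw [(degreeLTEquiv K N).finrank_eq, Module.finrank_fin_fun]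
    exact φ.charpoly_natDegree
  refine eq_top_iff.2 fun w _ => ?_
  obtain ⟨⟨p, -⟩, rfl⟩ := hsurj w
  simp only [Φ, LinearMap.coe_comp, Function.comp_apply, Submodule.coe_subtype,
    AlgHom.toLinearMap_apply, LinearMap.applyₗ_apply_apply, aeval_eq_sum_range,
    LinearMap.coe_sum, Finset.sum_apply, LinearMap.smul_apply]
  exact Submodule.sum_mem _ fun k _ =>
    Submodule.smul_mem _ _ (Submodule.subset_span (Set.mem_range_self k))

end Module.End

section

variable {K : Type*} [Field K] {m n : ℕ}

variable (K) in
def seqShift (V : Type*) [AddCommGroup V] [Module K V] : Module.End K (ℕ → V) :=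
  LinearMap.funLeft K V Nat.succ

section

variable {V W : Type*} [AddCommGroup V] [Module K V] [AddCommGroup W] [Module K W]

theorem seqShift_pow_apply (k : ℕ) (s : ℕ → V) (i : ℕ) : (seqShift K V ^ k) s i = s (i + k) := by
  induction k generalizing i with
  | zero => rfl
  | succ k ih =>
    rw [pow_succ', Module.End.mul_apply]
    change (seqShift K V ^ k) s (i + 1) = _
    rw [ih, add_right_comm, add_assoc]

theorem aeval_seqShift_apply (p : K[X]) (s : ℕ → V) (i : ℕ) :
    aeval (seqShift K V) p s i = ∑ k ∈ Finset.range (p.natDegree + 1), p.coeff k • s (i + k) := by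
  simp [aeval_eq_sum_range, seqShift_pow_apply]

theorem aeval_seqShift_comp (g : V →ₗ[K] W) (p : K[X]) (s : ℕ → V) :
    aeval (seqShift K W) p (g ∘ s) = g ∘ aeval (seqShift K V) p s := by
  ext i
  simp [aeval_seqShift_apply]

end

namespace LinearRecurrence

theorem isSolution_iff_aeval_seqShift_charPoly (E : LinearRecurrence K) (u : ℕ → K) :
    E.IsSolution u ↔ aeval (seqShift K K) E.charPoly u = 0 := by
  simp only [IsSolution, charPoly, funext_iff]
  refine forall_congr' fun i => ?_
  simp [aeval_monomial, seqShift_pow_apply, sub_eq_zero]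

theorem charPoly_neg_coeff {f : K[X]} (hf : f.Monic) :
    (⟨f.natDegree, fun k => -f.coeff k⟩ : LinearRecurrence K).charPoly = f := by
  conv_rhs => rw [hf.as_sum]
  simp [charPoly, ← C_mul_X_pow_eq_monomial, sub_eq_add_neg,
    Fin.sum_univ_eq_sum_range (fun k => C (f.coeff k) * X ^ k)]

theorem exists_isSolution_of_aeval_seqShift_eq_zero {f : K[X]} (hf : f.Monic) {u : ℕ → K}
    (hu : aeval (seqShift K K) f u = 0) :
    ∃ c : Fin f.natDegree → K, (⟨_, c⟩ : LinearRecurrence K).IsSolution u :=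
  ⟨_, (isSolution_iff_aeval_seqShift_charPoly _ _).2 (by rwa [charPoly_neg_coeff hf])⟩

end LinearRecurrence

theorem blockCompanion_mulVec_zero (C : Fin (n + 1) → Matrix (Fin m) (Fin m) K)
    (v : Fin (n + 1) × Fin m → K) (b : Fin m) :
    (blockCompanion m (n + 1) C *ᵥ v) (0, b) = (C 0 *ᵥ fun c => v (Fin.last n, c)) b := by
  have hlt (x : Fin n) : (x : ℕ) ≠ n := x.isLt.ne
  simp [blockCompanion, mulVec, dotProduct, Fintype.sum_prod_type, Fin.sum_univ_castSucc, hlt,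
    ite_and]

theorem blockCompanion_mulVec_succ (C : Fin (n + 1) → Matrix (Fin m) (Fin m) K)
    (v : Fin (n + 1) × Fin m → K) (p : Fin n) (b : Fin m) :
    (blockCompanion m (n + 1) C *ᵥ v) (p.succ, b) =
      (C p.succ *ᵥ fun c => v (Fin.last n, c)) b + v (p.castSucc, b) := by
  have hlt (x : Fin n) : (x : ℕ) ≠ n := x.isLt.ne
  simp [blockCompanion, mulVec, dotProduct, Fintype.sum_prod_type, Fin.sum_univ_castSucc, hlt,
    Fin.val_inj, ite_and, add_comm]

namespace MatrixRecurrence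

def solSpace (C : Fin n → Matrix (Fin m) (Fin m) K) : Submodule K (ℕ → Fin m → K) where
  carrier := {s | ∀ i, s (i + n) = ∑ j, C j *ᵥ s (i + j)}
  add_mem' {s t} hs ht i := by simp [hs i, ht i, mulVec_add, Finset.sum_add_distrib]
  zero_mem' i := by simp
  smul_mem' c s hs i := by simp [hs i, mulVec_smul, Finset.smul_sum]

theorem seqShift_mem_solSpace {C : Fin n → Matrix (Fin m) (Fin m) K} {s : ℕ → Fin m → K}
    (hs : s ∈ solSpace C) : seqShift K (Fin m → K) s ∈ solSpace C := fun i => by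
  simpa only [seqShift, LinearMap.funLeft_apply, Nat.succ_eq_add_one, add_right_comm]
    using hs (i + 1)

theorem aeval_seqShift_mem_solSpace {C : Fin n → Matrix (Fin m) (Fin m) K} {s : ℕ → Fin m → K}
    (hs : s ∈ solSpace C) (p : K[X]) : aeval (seqShift K (Fin m → K)) p s ∈ solSpace C := by
  rw [aeval_eq_sum_range, LinearMap.coe_sum, Finset.sum_apply]
  exact Submodule.sum_mem _ fun k _ => Submodule.smul_mem _ _
    (Module.End.pow_apply_mem_of_forall_mem k (fun _ => seqShift_mem_solSpace) _ hs)

variable (C : Fin (n + 1) → Matrix (Fin m) (Fin m) K)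

/-- Solving `blockCompanion m (n + 1) C *ᵥ state C s = state C (seqShift s)` block by block,
upwards from the last block `s 0`, forces this formula; the equation for block `0` is then the
recurrence itself (`state_seqShift`). -/
def state : (ℕ → Fin m → K) →ₗ[K] (Fin (n + 1) × Fin m → K) where
  toFun s q := s (n - q.1) q.2 - ∑ k ∈ Finset.Ioi q.1, (C k *ᵥ s (k - 1 - q.1)) q.2
  map_add' s t := by
    ext q
    simp only [Pi.add_apply, mulVec_add, Finset.sum_add_distrib]
    ring
  map_smul' c s := by
    ext q
    simp [mulVec_smul, Finset.mul_sum, mul_sub]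

theorem state_last (s : ℕ → Fin m → K) (b : Fin m) : state C s (Fin.last n, b) = s 0 b := by
  simp [state, ← Fin.top_eq_last]

theorem state_seqShift {s : ℕ → Fin m → K} (hs : s ∈ solSpace C) :
    state C (seqShift K (Fin m → K) s) = blockCompanion m (n + 1) C *ᵥ state C s := by
  ext ⟨p, b⟩
  cases p using Fin.cases with
  | zero =>
    rw [blockCompanion_mulVec_zero]
    simp only [state_last]
    have h0 := congrFun (hs 0) b
    simp only [state, seqShift, LinearMap.coe_mk, AddHom.coe_mk, LinearMap.funLeft_apply,
      Finset.sum_apply, Fin.sum_univ_succ, Fin.sum_Ioi_zero, Fin.val_succ, Fin.val_zero, zero_add,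
      tsub_zero, Nat.succ_eq_add_one, add_tsub_cancel_right] at h0 ⊢
    linear_combination h0
  | succ p =>
    rw [blockCompanion_mulVec_succ]
    have hIoi : Finset.Ioi p.castSucc = insert p.succ (Finset.Ioi p.succ) := by
      ext x
      simp only [Finset.mem_Ioi, Finset.mem_insert, Fin.lt_def, Fin.ext_iff, Fin.val_succ,
        Fin.val_castSucc]
      omega
    have hsum : ∑ x ∈ Finset.Ioi p, (C x.succ *ᵥ s (x - (p + 1) + 1)) b =
        ∑ x ∈ Finset.Ioi p, (C x.succ *ᵥ s (x - p)) b :=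
      Finset.sum_congr rfl fun x hx => by
        rw [Finset.mem_Ioi, Fin.lt_def] at hx
        congr 3
        omega
    simp only [state_last]
    simp only [state, seqShift, LinearMap.coe_mk, AddHom.coe_mk, LinearMap.funLeft_apply, hIoi,
      Finset.sum_insert (Finset.notMem_Ioi_self), Fin.sum_Ioi_succ]
    simp only [Fin.val_succ, Fin.val_castSucc, Nat.succ_eq_add_one, add_tsub_cancel_right,
      tsub_self, hsum, show n - (p + 1) + 1 = n - p by omega]
    ring

variable {C}

theorem state_seqShift_pow {s : ℕ → Fin m → K} (hs : s ∈ solSpace C) (k : ℕ) :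
    state C ((seqShift K (Fin m → K) ^ k) s) =
      ((blockCompanion m (n + 1) C).toLin' ^ k) (state C s) := by
  induction k generalizing s with
  | zero => rfl
  | succ k ih =>
    rw [pow_succ, Module.End.mul_apply, ih (seqShift_mem_solSpace hs), state_seqShift C hs,
      pow_succ, Module.End.mul_apply, toLin'_apply]

theorem state_aeval_seqShift {s : ℕ → Fin m → K} (hs : s ∈ solSpace C) (p : K[X]) :
    state C (aeval (seqShift K (Fin m → K)) p s) =
      aeval (blockCompanion m (n + 1) C).toLin' p (state C s) := by
  simp [aeval_eq_sum_range, state_seqShift_pow hs]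

theorem eq_zero_of_state_eq_zero {s : ℕ → Fin m → K} (hs : s ∈ solSpace C)
    (h : state C s = 0) : s = 0 := by
  ext i b
  calc s i b = state C ((seqShift K (Fin m → K) ^ i) s) (Fin.last n, b) := by
        rw [state_last, seqShift_pow_apply, zero_add]
    _ = 0 := by rw [state_seqShift_pow hs, h, map_zero]; rfl

theorem aeval_charpoly_seqShift_eq_zero {s : ℕ → Fin m → K} (hs : s ∈ solSpace C) :
    aeval (seqShift K (Fin m → K)) (blockCompanion m (n + 1) C).charpoly s = 0 :=
  eq_zero_of_state_eq_zero (aeval_seqShift_mem_solSpace hs _) <| by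
    rw [state_aeval_seqShift hs, ← charpoly_toLin', LinearMap.aeval_self_charpoly]
    rfl

theorem coordinate_ne_zero {s : ℕ → Fin m → K} (hs : s ∈ solSpace C)
    (hC : Irreducible (blockCompanion m (n + 1) C).charpoly) (hs0 : s ≠ 0) (j : Fin m) :
    (fun i => s i j) ≠ 0 := by
  intro hj
  have hspan := Module.End.span_range_pow_apply_eq_top (by rwa [charpoly_toLin'])
    fun h => hs0 (eq_zero_of_state_eq_zero hs h)
  have hker : Submodule.span K (Set.range fun k : ℕ =>
      ((blockCompanion m (n + 1) C).toLin' ^ k) (state C s)) ≤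
      LinearMap.ker (LinearMap.proj (R := K) (φ := fun _ : Fin (n + 1) × Fin m => K)
        (Fin.last n, j)) := by
    rw [Submodule.span_le]
    rintro _ ⟨k, rfl⟩
    simpa [← state_seqShift_pow hs, state_last, seqShift_pow_apply] using congrFun hj k
  rw [hspan] at hker
  simpa using hker (Submodule.mem_top (x := Pi.single (Fin.last n, j) 1))

end MatrixRecurrence

end

theorem coordinate_linear_complexity_of_primitive_general {K : Type*} [Field K] [Fintype K]
    (m n : ℕ) (hn : 0 < n)
    (C : Fin n → Matrix (Fin m) (Fin m) K)
    (hprim : IsPrimitivePoly K (blockCompanion m n C).charpoly)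
    (s : ℕ → Fin m → K)
    (hrec : ∀ i, s (i + n) = ∑ j : Fin n, (C j).mulVec (s (i + j)))
    (hs0 : ∃ i : Fin n, s (i : ℕ) ≠ 0) :
    ∀ j : Fin m,
      (∃ c : Fin (m * n) → K,
        ∀ i, s (i + m * n) j = ∑ k : Fin (m * n), c k * s (i + (k : ℕ)) j) ∧
      (∀ L : ℕ, L < m * n →
        ¬ ∃ c : Fin L → K, ∀ i, s (i + L) j = ∑ k : Fin L, c k * s (i + (k : ℕ)) j) := by
  obtain ⟨n, rfl⟩ := Nat.exists_eq_add_one_of_ne_zero hn.ne'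
  have hdeg : (blockCompanion m (n + 1) C).charpoly.natDegree = m * (n + 1) := by
    simp [charpoly_natDegree_eq_dim, mul_comm]
  have hs : s ∈ MatrixRecurrence.solSpace C := hrec
  have hs_ne : s ≠ 0 := fun h => by
    obtain ⟨i, hi⟩ := hs0
    exact hi (by simp [h])
  intro j
  have hf : aeval (seqShift K K) (blockCompanion m (n + 1) C).charpoly (fun i => s i j) = 0 := by
    have := aeval_seqShift_comp (LinearMap.proj j) (blockCompanion m (n + 1) C).charpoly s
    rw [MatrixRecurrence.aeval_charpoly_seqShift_eq_zero hs] at this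
    exact this
  have hj := MatrixRecurrence.coordinate_ne_zero hs hprim.2.1 hs_ne j
  refine ⟨hdeg ▸ LinearRecurrence.exists_isSolution_of_aeval_seqShift_eq_zero
    (charpoly_monic _) hf, fun L hL ⟨c, hc⟩ => ?_⟩
  have hle := Module.End.natDegree_le_of_aeval_apply_eq_zero hprim.2.1 hf hj
    (LinearRecurrence.charPoly_monic ⟨L, c⟩).ne_zero
    ((LinearRecurrence.isSolution_iff_aeval_seqShift_charPoly _ _).1 hc)
  rw [natDegree_eq_of_degree_eq_some (LinearRecurrence.charPoly_degree_eq_order _)] at hle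
  dsimp only at hle
  omega

theorem coordinate_linear_complexity_of_primitive {K : Type*} [Field K] [Fintype K]
    (m n : ℕ) (hm : 0 < m) (hn : 0 < n)
    (C : Fin n → Matrix (Fin m) (Fin m) K)
    (hprim : IsPrimitivePoly K (blockCompanion m n C).charpoly)
    (s : ℕ → Fin m → K)
    (hrec : ∀ i, s (i + n) = ∑ j : Fin n, (C j).mulVec (s (i + j)))
    (hs0 : ∃ i : Fin n, s (i : ℕ) ≠ 0) :
    ∀ j : Fin m,
      (∃ c : Fin (m * n) → K,
        ∀ i, s (i + m * n) j = ∑ k : Fin (m * n), c k * s (i + (k : ℕ)) j) ∧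
      (∀ L : ℕ, L < m * n →
        ¬ ∃ c : Fin L → K, ∀ i, s (i + L) j = ∑ k : Fin L, c k * s (i + (k : ℕ)) j) :=
  coordinate_linear_complexity_of_primitive_general m n hn C hprim s hrec hs0
end
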